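/- arXiv:1102.2297 — 2 statements merged into one kernel-verified Lean document; each statement's English description precedes it below -/
import Mathlib

section
/- For M > 0 and r ≥ 0, the Legendre transform in λ ≥ 0 of λ ↦ (e^{λM} - λM - 1)σ²/M² at r, namely sup_{λ ≥ 0} { λr - (e^{λM} - λM - 1)·σ²/M² }, equals (r/M + σ²/M²)log(Mr/σ² + 1) - r/M. -/
/-- For `M > 0`, `σ² > 0` and `β(λ) = (e^{λM} - λM - 1)σ²/M²`, the Legendre transform
`sup_{λ ≥ 0} (λ r - β(λ))` equals `(r/M + s/M²) log(M r/s + 1) - r/M = h_c(r)/M`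
with `c = σ²/M`, for every `r ≥ 0`. -/
theorem legendre_beta (M s r : ℝ) (hM : 0 < M) (hs : 0 < s) (hr : 0 ≤ r) :
    IsLUB {y : ℝ | ∃ l : ℝ, 0 ≤ l ∧
        y = l * r - (Real.exp (l * M) - l * M - 1) * s / M ^ 2}
      ((r / M + s / M ^ 2) * Real.log (M * r / s + 1) - r / M) := by
  have ht : (0:ℝ) < M * r / s + 1 := by positivity
  have ht1 : (1:ℝ) ≤ M * r / s + 1 := by
    have : 0 ≤ M * r / s := by positivity
    linarith
  set t : ℝ := M * r / s + 1 with htdef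
  have hts : t * s = M * r + s := by rw [htdef]; field_simp
  have hlog0 : 0 ≤ Real.log t := Real.log_nonneg ht1
  clear_value t
  apply IsGreatest.isLUB
  constructor
  · refine ⟨Real.log t / M, by positivity, ?_⟩
    have hexp : Real.exp (Real.log t / M * M) = t := by
      rw [div_mul_cancel₀ _ hM.ne', Real.exp_log ht]
    rw [hexp]
    field_simp [hs.ne', hM.ne']
    linear_combination hts
  · rintro y ⟨l, hl, rfl⟩
    have h1 : t * (1 + (l * M - Real.log t)) ≤ Real.exp (l * M) := by
      calc t * (1 + (l * M - Real.log t))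
          ≤ Real.exp (Real.log t) * Real.exp (l * M - Real.log t) := by
            rw [Real.exp_log ht]
            have := Real.add_one_le_exp (l * M - Real.log t)
            nlinarith
        _ = Real.exp (l * M) := by rw [← Real.exp_add]; ring_nf
    rw [← sub_nonneg]
    have hM2 : (0:ℝ) < M ^ 2 := by positivity
    rw [show (r / M + s / M ^ 2) * Real.log t - r / M -
        (l * r - (Real.exp (l * M) - l * M - 1) * s / M ^ 2)
        = ((M * r + s) * Real.log t - r * M - l * r * M ^ 2
          + (Real.exp (l * M) - l * M - 1) * s) / M ^ 2 by field_simp; ring]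
    apply div_nonneg _ hM2.le
    have h2 : (M * r + s) * (1 + (l * M - Real.log t)) ≤ s * Real.exp (l * M) := by
      calc (M * r + s) * (1 + (l * M - Real.log t))
          = s * (t * (1 + (l * M - Real.log t))) := by rw [← hts]; ring
        _ ≤ s * Real.exp (l * M) := by nlinarith [h1, hs]
    nlinarith [h2]
end

section
/- For 0 < λ ≤ λ', the L¹-Wasserstein distance between the Poisson distributions P(λ') and P(λ) on ℕ with the Euclidean metric equals λ' - λ. -/
open MeasureTheory ProbabilityTheory
open scoped ENNReal NNReal

/-- The L¹-Wasserstein distance (for the Euclidean metric) between two measures on `ℕ`,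
defined as the infimum of the transport cost over all couplings. -/
noncomputable def W1Nat (μ ν : Measure ℕ) : ℝ≥0∞ :=
  ⨅ (π : Measure (ℕ × ℕ)) (_ : IsProbabilityMeasure π)
    (_ : π.map Prod.fst = μ) (_ : π.map Prod.snd = ν),
    ∫⁻ p, ENNReal.ofReal |(p.1 : ℝ) - (p.2 : ℝ)| ∂π

/-! Since `P(λ') = P(λ) ∗ P(λ' - λ)`, coupling `X + Y` with `X` for independent `X ∼ P(λ)`,
`Y ∼ P(λ' - λ)` costs `E[Y] = λ' - λ`. Conversely, any coupling `(X', X)` costs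
`E|X' - X| ≥ E[X'] - E[X] = λ' - λ`. -/

lemma W1Nat_le_of_coupling {μ ν : Measure ℕ} (π : Measure (ℕ × ℕ)) [IsProbabilityMeasure π]
    (h₁ : π.map Prod.fst = μ) (h₂ : π.map Prod.snd = ν) :
    W1Nat μ ν ≤ ∫⁻ p, ENNReal.ofReal |(p.1 : ℝ) - (p.2 : ℝ)| ∂π :=
  iInf₂_le_of_le π ‹_› <| iInf₂_le h₁ h₂

lemma natCast_sub_le_ofReal_abs (m n : ℕ) :
    (m : ℝ≥0∞) - n ≤ ENNReal.ofReal |(m : ℝ) - n| := by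
  rw [← ENNReal.ofReal_natCast m, ← ENNReal.ofReal_natCast n,
    ← ENNReal.ofReal_sub _ n.cast_nonneg]
  exact ENNReal.ofReal_le_ofReal (le_abs_self _)

lemma lintegral_natCast_sub_le_W1Nat (μ ν : Measure ℕ) :
    ∫⁻ n, (n : ℝ≥0∞) ∂μ - ∫⁻ n, (n : ℝ≥0∞) ∂ν ≤ W1Nat μ ν := by
  refine le_iInf fun π => le_iInf fun _ => le_iInf fun h₁ => le_iInf fun h₂ => ?_
  subst h₁ h₂
  rw [lintegral_map .of_discrete measurable_fst, lintegral_map .of_discrete measurable_snd]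
  calc ∫⁻ p, (p.1 : ℝ≥0∞) ∂π - ∫⁻ p, (p.2 : ℝ≥0∞) ∂π
      ≤ ∫⁻ p, ((p.1 : ℝ≥0∞) - p.2) ∂π := lintegral_sub_le _ _ .of_discrete
    _ ≤ _ := lintegral_mono fun p => natCast_sub_le_ofReal_abs p.1 p.2

lemma W1Nat_conv_le (μ ν : Measure ℕ) [IsProbabilityMeasure μ] [IsProbabilityMeasure ν] :
    W1Nat (μ ∗ ν) μ ≤ ∫⁻ n, (n : ℝ≥0∞) ∂ν := by
  let T : ℕ × ℕ → ℕ × ℕ := fun q => (q.1 + q.2, q.1)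
  have hT : Measurable T := .of_discrete
  have : IsProbabilityMeasure ((μ.prod ν).map T) :=
    Measure.isProbabilityMeasure_map hT.aemeasurable
  calc W1Nat (μ ∗ ν) μ ≤ ∫⁻ p, ENNReal.ofReal |(p.1 : ℝ) - (p.2 : ℝ)| ∂(μ.prod ν).map T := by
        refine W1Nat_le_of_coupling _ ?_ ?_
        · rw [Measure.map_map measurable_fst hT]; rfl
        · rw [Measure.map_map measurable_snd hT]
          exact measurePreserving_fst.map_eq
    _ = ∫⁻ q, (q.2 : ℝ≥0∞) ∂μ.prod ν := by
        rw [lintegral_map .of_discrete hT]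
        refine lintegral_congr fun q => ?_
        simp [T, ENNReal.ofReal_natCast]
    _ = ∫⁻ n, (n : ℝ≥0∞) ∂ν := measurePreserving_snd.lintegral_comp .of_discrete

lemma natCast_succ_mul_poissonMeasure_singleton (r : ℝ≥0) (n : ℕ) :
    ((n + 1 : ℕ) : ℝ≥0∞) * poissonMeasure r {n + 1} = r * poissonMeasure r {n} := by
  rw [poissonMeasure_singleton, poissonMeasure_singleton, ← ENNReal.ofReal_natCast,
    ← ENNReal.ofReal_coe_nnreal, ← ENNReal.ofReal_mul (by positivity),
    ← ENNReal.ofReal_mul (by positivity), Nat.factorial_succ, pow_succ]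
  congr 1
  push_cast
  field_simp

lemma lintegral_natCast_poissonMeasure (r : ℝ≥0) :
    ∫⁻ n, (n : ℝ≥0∞) ∂poissonMeasure r = r := by
  have hmass : ∑' n, poissonMeasure r {n} = 1 := by
    simpa using (lintegral_countable' (μ := poissonMeasure r) 1).symm
  rw [lintegral_countable', tsum_eq_zero_add' ENNReal.summable]
  simp_rw [natCast_succ_mul_poissonMeasure_singleton, ENNReal.tsum_mul_left, hmass]
  simp

theorem W1_poisson_general (lam lam' : ℝ≥0) (hle : lam ≤ lam') :
    W1Nat (poissonMeasure lam') (poissonMeasure lam)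
      = ENNReal.ofReal ((lam' : ℝ) - (lam : ℝ)) := by
  have hdiff : ENNReal.ofReal ((lam' : ℝ) - lam) = lam' - lam := by
    rw [ENNReal.ofReal_sub _ lam.coe_nonneg, ENNReal.ofReal_coe_nnreal, ENNReal.ofReal_coe_nnreal]
  have hconv : poissonMeasure lam' = poissonMeasure lam ∗ poissonMeasure (lam' - lam) := by
    rw [poissonMeasure_conv_poissonMeasure, add_tsub_cancel_of_le hle]
  refine le_antisymm ?_ ?_
  · calc W1Nat (poissonMeasure lam') (poissonMeasure lam)
        ≤ ∫⁻ n, (n : ℝ≥0∞) ∂poissonMeasure (lam' - lam) := hconv ▸ W1Nat_conv_le _ _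
      _ = ENNReal.ofReal ((lam' : ℝ) - lam) := by
        rw [lintegral_natCast_poissonMeasure, hdiff, ENNReal.coe_sub]
  · simpa only [lintegral_natCast_poissonMeasure, hdiff]
      using lintegral_natCast_sub_le_W1Nat (poissonMeasure lam') (poissonMeasure lam)

/-- For `0 < λ ≤ λ'`, `W₁(P(λ'), P(λ)) = λ' - λ`. -/
theorem W1_poisson (lam lam' : ℝ≥0) (h0 : 0 < lam) (hle : lam ≤ lam') :
    W1Nat (poissonMeasure lam') (poissonMeasure lam)
      = ENNReal.ofReal ((lam' : ℝ) - (lam : ℝ)) :=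
  W1_poisson_general lam lam' hle
end
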